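/- For every ℓ ∈ ℕ there exists C = C(ℓ) > 0 such that |∂_t^ℓ h_t(n)| ≤ C t^{-(ℓ+1/2)} (1 + |n|/√t)^{-ℓ} for all n ∈ ℤ and all t > 0. -/

import Mathlib

/-- The `ℓ`-th time-derivative of the discrete heat kernel
`h_t(n) = (1/π) ∫_0^π e^{-2t(1-cos θ)} cos(nθ) dθ`:
`∂_t^ℓ h_t(n) = (1/π) ∫_0^π (-2(1-cos θ))^ℓ e^{-2t(1-cos θ)} cos(nθ) dθ`. -/
noncomputable def heatKernelDeriv (ℓ : ℕ) (t : ℝ) (n : ℤ) : ℝ :=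
  (1 / Real.pi) * ∫ θ in (0:ℝ)..Real.pi,
    (-2 * (1 - Real.cos θ)) ^ ℓ * Real.exp (-2 * t * (1 - Real.cos θ)) * Real.cos ((n : ℝ) * θ)


open Real MeasureTheory intervalIntegral

namespace HKD

structure Tm where
  c : ℝ
  a : ℕ
  s : ℕ
  co : ℕ
  m : ℕ

noncomputable def uu (θ : ℝ) : ℝ := 2 * (1 - Real.cos θ)

noncomputable def tval (T : Tm) (t θ : ℝ) : ℝ :=
  T.c * t ^ T.a * Real.sin θ ^ T.s * Real.cos θ ^ T.co * uu θ ^ T.m * Real.exp (-(t * uu θ))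

def dTm (T : Tm) : List Tm :=
  [⟨T.c * T.s, T.a, T.s - 1, T.co + 1, T.m⟩,
   ⟨-(T.c * T.co), T.a, T.s + 1, T.co - 1, T.m⟩,
   ⟨T.c * (2 * T.m), T.a, T.s + 1, T.co, T.m - 1⟩,
   ⟨-(2 * T.c), T.a + 1, T.s + 1, T.co, T.m⟩]

noncomputable def Lval (L : List Tm) (t θ : ℝ) : ℝ := (L.map fun T => tval T t θ).sum

def dL (L : List Tm) : List Tm := L.flatMap dTm

def FF (ℓ : ℕ) : ℕ → List Tm
  | 0 => [⟨(-1 : ℝ) ^ ℓ, 0, 0, 0, ℓ⟩]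
  | k+1 => dL (FF ℓ k)

lemma Lval_nil (t θ : ℝ) : Lval [] t θ = 0 := rfl

lemma Lval_cons (T : Tm) (L : List Tm) (t θ : ℝ) :
    Lval (T :: L) t θ = tval T t θ + Lval L t θ := by simp [Lval]

lemma Lval_append (L₁ L₂ : List Tm) (t θ : ℝ) :
    Lval (L₁ ++ L₂) t θ = Lval L₁ t θ + Lval L₂ t θ := by simp [Lval]

lemma continuous_uu : Continuous uu := by unfold uu; fun_prop

lemma continuous_tval (T : Tm) (t : ℝ) : Continuous (fun θ => tval T t θ) := by
  unfold tval uu; fun_prop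

lemma continuous_Lval (L : List Tm) (t : ℝ) : Continuous (fun θ => Lval L t θ) := by
  induction L with
  | nil => simpa [Lval] using continuous_const
  | cons T L ih =>
      have := (continuous_tval T t).add ih
      simp only [Lval_cons]; exact this

lemma hasDerivAt_uu (θ : ℝ) : HasDerivAt uu (2 * Real.sin θ) θ := by
  have h : HasDerivAt (fun x : ℝ => 1 - Real.cos x) (Real.sin θ) θ := by
    simpa using (Real.hasDerivAt_cos θ).const_sub 1
  exact h.const_mul 2

lemma hasDerivAt_tval (T : Tm) (t θ : ℝ) :
    HasDerivAt (fun θ => tval T t θ) (Lval (dTm T) t θ) θ := by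
  have hs : HasDerivAt (fun x => Real.sin x ^ T.s)
      ((T.s : ℝ) * Real.sin θ ^ (T.s - 1) * Real.cos θ) θ :=
    (Real.hasDerivAt_sin θ).pow T.s
  have hc : HasDerivAt (fun x => Real.cos x ^ T.co)
      ((T.co : ℝ) * Real.cos θ ^ (T.co - 1) * (-Real.sin θ)) θ :=
    (Real.hasDerivAt_cos θ).pow T.co
  have hu : HasDerivAt (fun x => uu x ^ T.m)
      ((T.m : ℝ) * uu θ ^ (T.m - 1) * (2 * Real.sin θ)) θ :=
    (hasDerivAt_uu θ).pow T.m
  have hE : HasDerivAt (fun x => Real.exp (-(t * uu x)))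
      (Real.exp (-(t * uu θ)) * (-(t * (2 * Real.sin θ)))) θ := by
    have h1 : HasDerivAt (fun x => -(t * uu x)) (-(t * (2 * Real.sin θ))) θ :=
      ((hasDerivAt_uu θ).const_mul t).neg
    exact h1.exp
  have H := (((hs.mul hc).mul hu).mul hE).const_mul (T.c * t ^ T.a)
  refine (H.congr_of_eventuallyEq (Filter.Eventually.of_forall fun y => ?_)).congr_deriv ?_
  · simp only [tval, Pi.mul_apply]; ring
  · simp only [Lval, dTm, tval, List.map_cons, List.map_nil, List.sum_cons, List.sum_nil, Pi.mul_apply]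
    push_cast
    ring

lemma hasDerivAt_Lval (L : List Tm) (t θ : ℝ) :
    HasDerivAt (fun θ => Lval L t θ) (Lval (dL L) t θ) θ := by
  induction L with
  | nil => simpa [Lval, dL] using hasDerivAt_const θ (0:ℝ)
  | cons T L ih =>
      have h := (hasDerivAt_tval T t θ).add ih
      have h2 : dL (T :: L) = dTm T ++ dL L := by simp [dL]
      simp only [Lval_cons, h2, Lval_append]; exact h

/-- weight/parity invariant -/
def inv (ℓ k : ℕ) (T : Tm) : Prop :=
  2 * ℓ + 2 * T.a ≤ T.s + 2 * T.m + k ∧ (T.c = 0 ∨ T.s % 2 = k % 2)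

lemma inv_dTm {ℓ k : ℕ} {T : Tm} (h : inv ℓ k T) :
    ∀ T' ∈ dTm T, inv ℓ (k+1) T' := by
  obtain ⟨h1, h2⟩ := h
  intro T' hT'
  simp only [dTm, List.mem_cons, List.not_mem_nil, or_false] at hT'
  rcases hT' with rfl | rfl | rfl | rfl
  · constructor
    · simp only; omega
    · rcases h2 with h2 | h2
      · left; simp [h2]
      · rcases Nat.eq_zero_or_pos T.s with hs | hs
        · left; simp [hs]
        · right; simp only; omega
  · constructor
    · simp only; omega
    · rcases h2 with h2 | h2
      · left; simp [h2]
      · right; simp only; omega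
  · constructor
    · simp only; omega
    · rcases h2 with h2 | h2
      · left; simp [h2]
      · right; simp only; omega
  · constructor
    · simp only; omega
    · rcases h2 with h2 | h2
      · left; simp [h2]
      · right; simp only; omega

lemma inv_FF (ℓ : ℕ) : ∀ k, ∀ T ∈ FF ℓ k, inv ℓ k T := by
  intro k
  induction k with
  | zero =>
      intro T hT
      simp only [FF, List.mem_cons, List.not_mem_nil, or_false] at hT
      subst hT
      refine ⟨by simp, Or.inr (by simp)⟩
  | succ k ih =>
      intro T hT
      simp only [FF, dL, List.mem_flatMap] at hT
      obtain ⟨T₀, hT₀, hmem⟩ := hT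
      exact inv_dTm (ih T₀ hT₀) T hmem

lemma tval_zero_of_sin {T : Tm} {t θ : ℝ} (hθ : Real.sin θ = 0) (hs : 1 ≤ T.s) :
    tval T t θ = 0 := by
  simp [tval, hθ, zero_pow (by omega : T.s ≠ 0)]

lemma Lval_boundary (ℓ k : ℕ) (hk : k % 2 = 1) (t θ : ℝ) (hθ : Real.sin θ = 0) :
    Lval (FF ℓ k) t θ = 0 := by
  have h : ∀ T ∈ FF ℓ k, tval T t θ = 0 := by
    intro T hT
    obtain ⟨-, h2⟩ := inv_FF ℓ k T hT
    rcases h2 with h2 | h2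
    · simp [tval, h2]
    · exact tval_zero_of_sin hθ (by omega)
  revert h
  generalize FF ℓ k = L
  intro h
  induction L with
  | nil => rfl
  | cons T L ih =>
      rw [Lval_cons, h T (by simp), ih (fun T hT => h T (by simp [hT]))]
      simp

noncomputable def GI (p : ℕ) : ℝ := ∫ x in Set.Ioi (0:ℝ), x ^ p * Real.exp (-x^2)

lemma GI_nonneg (p : ℕ) : 0 ≤ GI p := by
  apply setIntegral_nonneg measurableSet_Ioi
  intro x hx
  have hx' : (0:ℝ) < x := hx
  positivity

lemma integrableOn_pow_exp (p : ℕ) {b : ℝ} (hb : 0 < b) :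
    IntegrableOn (fun x : ℝ => x ^ p * Real.exp (-(b * x^2))) (Set.Ioi 0) := by
  have h := integrableOn_rpow_mul_exp_neg_mul_sq hb (s := (p:ℝ)) (lt_of_lt_of_le neg_one_lt_zero (Nat.cast_nonneg p))
  apply h.congr_fun ?_ measurableSet_Ioi
  intro x hx
  simp [Real.rpow_natCast]

lemma integral_pow_exp_le (p : ℕ) {c t : ℝ} (hc : 0 < c) (ht : 0 < t) :
    ∫ θ in (0:ℝ)..π, θ ^ p * Real.exp (-(c * t * θ^2)) ≤
      (c ^ (-((p:ℝ)+1)/2) * GI p) * t ^ (-((p:ℝ)+1)/2) := by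
  have hct : 0 < c * t := mul_pos hc ht
  set b := Real.sqrt (c*t) with hbdef
  have hb : 0 < b := Real.sqrt_pos.mpr hct
  have hbsq : b ^ 2 = c * t := Real.sq_sqrt hct.le
  -- change of variables
  have key : ∀ θ : ℝ, (b*θ) ^ p * Real.exp (-(b*θ)^2)
      = b ^ p * (θ ^ p * Real.exp (-(c * t * θ^2))) := by
    intro θ
    have : (b*θ)^2 = c * t * θ^2 := by rw [mul_pow, hbsq]
    rw [this, mul_pow]; ring
  have cov := integral_comp_mul_left_Ioi (fun x : ℝ => x ^ p * Real.exp (-x^2)) 0 hb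
  simp only [mul_zero, smul_eq_mul] at cov
  have cov2 : ∫ θ in Set.Ioi (0:ℝ), b ^ p * (θ ^ p * Real.exp (-(c * t * θ^2)))
      = b⁻¹ * GI p := by
    unfold GI
    rw [← cov]
    apply setIntegral_congr_fun measurableSet_Ioi
    intro θ _
    exact (key θ).symm
  rw [MeasureTheory.integral_const_mul] at cov2
  have hIoi : ∫ θ in Set.Ioi (0:ℝ), θ ^ p * Real.exp (-(c * t * θ^2))
      = b⁻¹ ^ (p+1) * GI p := by
    have hbp : (0:ℝ) < b ^ p := pow_pos hb p
    have hG : GI p = b * (b ^ p * ∫ θ in Set.Ioi (0:ℝ), θ ^ p * Real.exp (-(c * t * θ^2))) := by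
      rw [cov2, ← mul_assoc, mul_inv_cancel₀ hb.ne', one_mul]
    have hbp1 : b ^ (p+1) ≠ 0 := by positivity
    rw [hG, inv_pow, show b * (b ^ p * ∫ θ in Set.Ioi (0:ℝ), θ ^ p * Real.exp (-(c * t * θ^2)))
      = b ^ (p+1) * ∫ θ in Set.Ioi (0:ℝ), θ ^ p * Real.exp (-(c * t * θ^2)) by ring,
      ← mul_assoc, inv_mul_cancel₀ hbp1, one_mul]
  -- compare interval integral with Ioi integral
  have hint : IntegrableOn (fun θ : ℝ => θ ^ p * Real.exp (-(c * t * θ^2))) (Set.Ioi 0) :=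
    integrableOn_pow_exp p hct
  have hmono : ∫ θ in (0:ℝ)..π, θ ^ p * Real.exp (-(c * t * θ^2))
      ≤ ∫ θ in Set.Ioi (0:ℝ), θ ^ p * Real.exp (-(c * t * θ^2)) := by
    rw [intervalIntegral.integral_of_le Real.pi_pos.le]
    apply setIntegral_mono_set hint
    · filter_upwards [self_mem_ae_restrict (measurableSet_Ioi : MeasurableSet (Set.Ioi (0:ℝ)))]
        with x hx
      have : (0:ℝ) < x := hx
      positivity
    · exact HasSubset.Subset.eventuallyLE Set.Ioc_subset_Ioi_self
  refine hmono.trans (le_of_eq ?_)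
  rw [hIoi]
  have hb1 : b⁻¹ ^ (p+1) = (c*t) ^ (-((p:ℝ)+1)/2) := by
    rw [hbdef, ← Real.rpow_natCast (Real.sqrt (c*t))⁻¹ (p+1),
      ← Real.rpow_neg_one (Real.sqrt (c*t)), Real.sqrt_eq_rpow,
      ← Real.rpow_mul hct.le, ← Real.rpow_mul hct.le]
    congr 1
    push_cast
    ring
  rw [hb1, Real.mul_rpow hc.le ht.le]
  ring

lemma uu_nonneg (θ : ℝ) : 0 ≤ uu θ := by
  have := Real.cos_le_one θ; unfold uu; linarith

lemma uu_le_four (θ : ℝ) : uu θ ≤ 4 := by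
  have := Real.neg_one_le_cos θ; unfold uu; linarith

lemma uu_le_sq (θ : ℝ) : uu θ ≤ θ^2 := by
  have := Real.one_sub_sq_div_two_le_cos (x := θ); unfold uu; linarith

lemma sq_le_uu {θ : ℝ} (hθ : θ ∈ Set.Icc (0:ℝ) π) : 4/π^2 * θ^2 ≤ uu θ := by
  have h : |θ| ≤ π := by
    rw [abs_of_nonneg hθ.1]; exact hθ.2
  have := Real.cos_le_one_sub_mul_cos_sq h
  have e : 4/π^2*θ^2 = 2*(2/π^2*θ^2) := by ring
  unfold uu; linarith

lemma tval_le_gauss (T : Tm) {t θ : ℝ} (ht : 0 < t) (hθ : θ ∈ Set.Icc (0:ℝ) π) :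
    |tval T t θ| ≤ |T.c| * t ^ T.a *
      (θ ^ (T.s + 2*T.m) * Real.exp (-(4/π^2 * t * θ^2))) := by
  have habs : |tval T t θ| = |T.c| * t ^ T.a * |Real.sin θ| ^ T.s * |Real.cos θ| ^ T.co
      * uu θ ^ T.m * Real.exp (-(t * uu θ)) := by
    rw [tval, abs_mul, abs_mul, abs_mul, abs_mul, abs_mul, abs_pow, abs_pow, abs_pow, abs_pow,
      abs_of_pos ht, Real.abs_exp, abs_of_nonneg (uu_nonneg θ)]
  rw [habs, pow_add, pow_mul]
  have h1 : |Real.sin θ| ^ T.s ≤ θ ^ T.s := by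
    apply pow_le_pow_left₀ (abs_nonneg _)
    calc |Real.sin θ| ≤ |θ| := Real.abs_sin_le_abs
    _ = θ := abs_of_nonneg hθ.1
  have h2 : |Real.cos θ| ^ T.co ≤ 1 := by
    apply pow_le_one₀ (abs_nonneg _) (Real.abs_cos_le_one θ)
  have h3 : uu θ ^ T.m ≤ (θ^2) ^ T.m := pow_le_pow_left₀ (uu_nonneg θ) (uu_le_sq θ) T.m
  have h4 : Real.exp (-(t * uu θ)) ≤ Real.exp (-(4/π^2 * t * θ^2)) := by
    apply Real.exp_le_exp.mpr
    have := sq_le_uu hθ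
    nlinarith [ht]
  calc |T.c| * t ^ T.a * |Real.sin θ| ^ T.s * |Real.cos θ| ^ T.co * uu θ ^ T.m
        * Real.exp (-(t * uu θ))
      ≤ |T.c| * t ^ T.a * (θ ^ T.s) * 1 * ((θ^2) ^ T.m) * Real.exp (-(4/π^2 * t * θ^2)) := by
        have hθs : (0:ℝ) ≤ θ ^ T.s := pow_nonneg hθ.1 T.s
        have hc : (0:ℝ) ≤ |T.c| * t ^ T.a := by positivity
        gcongr <;> first
          | exact h1 | exact h2 | exact h3 | exact h4
          | exact pow_nonneg (uu_nonneg θ) _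
          | positivity
    _ = |T.c| * t ^ T.a * (θ ^ T.s * (θ^2) ^ T.m * Real.exp (-(4/π^2 * t * θ^2))) := by ring

lemma tval_le_crude (T : Tm) {t θ : ℝ} (ht : 0 < t) (ht1 : t ≤ 1) (hθ : θ ∈ Set.Icc (0:ℝ) π) :
    |tval T t θ| ≤ |T.c| * 4 ^ T.m := by
  have habs : |tval T t θ| = |T.c| * t ^ T.a * |Real.sin θ| ^ T.s * |Real.cos θ| ^ T.co
      * uu θ ^ T.m * Real.exp (-(t * uu θ)) := by
    rw [tval, abs_mul, abs_mul, abs_mul, abs_mul, abs_mul, abs_pow, abs_pow, abs_pow, abs_pow,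
      abs_of_pos ht, Real.abs_exp, abs_of_nonneg (uu_nonneg θ)]
  rw [habs]
  have h0 : t ^ T.a ≤ 1 := pow_le_one₀ ht.le ht1
  have h1 : |Real.sin θ| ^ T.s ≤ 1 := pow_le_one₀ (abs_nonneg _) (Real.abs_sin_le_one θ)
  have h2 : |Real.cos θ| ^ T.co ≤ 1 := pow_le_one₀ (abs_nonneg _) (Real.abs_cos_le_one θ)
  have h3 : uu θ ^ T.m ≤ 4 ^ T.m := pow_le_pow_left₀ (uu_nonneg θ) (uu_le_four θ) T.m
  have h4 : Real.exp (-(t * uu θ)) ≤ 1 := by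
    rw [Real.exp_le_one_iff]
    have := uu_nonneg θ
    nlinarith
  calc |T.c| * t ^ T.a * |Real.sin θ| ^ T.s * |Real.cos θ| ^ T.co * uu θ ^ T.m
        * Real.exp (-(t * uu θ))
      ≤ |T.c| * 1 * 1 * 1 * 4 ^ T.m * 1 := by
        gcongr <;> first
          | exact h0 | exact h1 | exact h2 | exact h3 | exact h4
          | exact pow_nonneg (uu_nonneg θ) _
          | exact abs_nonneg _
          | positivity
    _ = |T.c| * 4 ^ T.m := by ring

lemma term_bound (T : Tm) (W : ℕ) (hW : W + 2*T.a ≤ T.s + 2*T.m) :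
    ∃ D, 0 ≤ D ∧ ∀ t : ℝ, 0 < t →
      (∫ θ in (0:ℝ)..π, |tval T t θ|) ≤ D * t ^ (-((W:ℝ)+1)/2) := by
  set p := T.s + 2*T.m with hp
  have hπ : (0:ℝ) < π := Real.pi_pos
  have hgp : (0:ℝ) < 4/π^2 := by positivity
  have hDnn : (0:ℝ) ≤ |T.c| * 4 ^ T.m * π + |T.c| * ((4/π^2) ^ (-((p:ℝ)+1)/2) * GI p) := by
    have h1 : (0:ℝ) ≤ |T.c| * 4 ^ T.m * π := by positivity
    have h2 : (0:ℝ) ≤ |T.c| * ((4/π^2) ^ (-((p:ℝ)+1)/2) * GI p) :=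
      mul_nonneg (abs_nonneg _) (mul_nonneg (Real.rpow_nonneg hgp.le _) (GI_nonneg p))
    linarith
  refine ⟨|T.c| * 4 ^ T.m * π + |T.c| * ((4/π^2) ^ (-((p:ℝ)+1)/2) * GI p), hDnn, ?_⟩
  intro t ht
  have htpow : (0:ℝ) < t ^ (-((W:ℝ)+1)/2) := Real.rpow_pos_of_pos ht _
  have hint1 : IntervalIntegrable (fun θ => |tval T t θ|) volume 0 π :=
    ((continuous_tval T t).abs).intervalIntegrable 0 π
  rcases le_or_gt t 1 with ht1 | ht1
  · -- small t : crude bound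
    have hmono : (∫ θ in (0:ℝ)..π, |tval T t θ|) ≤ ∫ _ in (0:ℝ)..π, |T.c| * 4 ^ T.m := by
      apply intervalIntegral.integral_mono_on hπ.le hint1
        (intervalIntegrable_const)
      intro θ hθ
      exact tval_le_crude T ht ht1 hθ
    rw [intervalIntegral.integral_const, sub_zero, smul_eq_mul] at hmono
    have h1t : (1:ℝ) ≤ t ^ (-((W:ℝ)+1)/2) := by
      have hWnn : -((W:ℝ)+1)/2 ≤ 0 := by
        have : (0:ℝ) ≤ (W:ℝ)+1 := by positivity
        linarith
      have := Real.rpow_le_rpow_of_exponent_ge ht ht1 hWnn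
      simpa [Real.rpow_zero] using this
    calc (∫ θ in (0:ℝ)..π, |tval T t θ|) ≤ π * (|T.c| * 4 ^ T.m) := hmono
      _ = (|T.c| * 4 ^ T.m * π) * 1 := by ring
      _ ≤ (|T.c| * 4 ^ T.m * π) * t ^ (-((W:ℝ)+1)/2) := by
          have : (0:ℝ) ≤ |T.c| * 4 ^ T.m * π := by positivity
          nlinarith
      _ ≤ _ := by
          have : (0:ℝ) ≤ |T.c| * ((4/π^2) ^ (-((p:ℝ)+1)/2) * GI p) := by
            have := GI_nonneg p; positivity
          nlinarith
  · -- large t : gaussian bound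
    have hmono : (∫ θ in (0:ℝ)..π, |tval T t θ|) ≤
        ∫ θ in (0:ℝ)..π, |T.c| * t ^ T.a * (θ ^ p * Real.exp (-(4/π^2 * t * θ^2))) := by
      apply intervalIntegral.integral_mono_on hπ.le hint1
      · apply Continuous.intervalIntegrable; fun_prop
      · intro θ hθ
        exact tval_le_gauss T ht hθ
    rw [intervalIntegral.integral_const_mul] at hmono
    have hkey := integral_pow_exp_le p hgp ht
    have hGK : (0:ℝ) ≤ (4/π^2) ^ (-((p:ℝ)+1)/2) * GI p := by
      have := GI_nonneg p; positivity
    have hstep : |T.c| * t ^ T.a * (∫ θ in (0:ℝ)..π, θ ^ p * Real.exp (-(4/π^2 * t * θ^2)))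
        ≤ |T.c| * ((4/π^2) ^ (-((p:ℝ)+1)/2) * GI p) * (t ^ (T.a:ℝ) * t ^ (-((p:ℝ)+1)/2)) := by
      rw [Real.rpow_natCast]
      calc |T.c| * t ^ T.a * (∫ θ in (0:ℝ)..π, θ ^ p * Real.exp (-(4/π^2 * t * θ^2)))
          ≤ |T.c| * t ^ T.a * (((4/π^2) ^ (-((p:ℝ)+1)/2) * GI p) * t ^ (-((p:ℝ)+1)/2)) := by
            gcongr <;> first | exact hkey | positivity
        _ = _ := by ring
    have hexp : t ^ (T.a:ℝ) * t ^ (-((p:ℝ)+1)/2) ≤ t ^ (-((W:ℝ)+1)/2) := by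
      rw [← Real.rpow_add ht]
      apply Real.rpow_le_rpow_of_exponent_le ht1.le
      have hcast : (W:ℝ) + 2*(T.a:ℝ) ≤ (p:ℝ) := by exact_mod_cast hW
      linarith
    calc (∫ θ in (0:ℝ)..π, |tval T t θ|)
        ≤ |T.c| * t ^ T.a * (∫ θ in (0:ℝ)..π, θ ^ p * Real.exp (-(4/π^2 * t * θ^2))) := hmono
      _ ≤ |T.c| * ((4/π^2) ^ (-((p:ℝ)+1)/2) * GI p) * (t ^ (T.a:ℝ) * t ^ (-((p:ℝ)+1)/2)) := hstep
      _ ≤ |T.c| * ((4/π^2) ^ (-((p:ℝ)+1)/2) * GI p) * t ^ (-((W:ℝ)+1)/2) := by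
          gcongr
      _ ≤ _ := by nlinarith [abs_nonneg T.c, pow_nonneg (by norm_num : (0:ℝ) ≤ 4) T.m, hπ, htpow,
            mul_nonneg (mul_nonneg (abs_nonneg T.c) (pow_nonneg (by norm_num : (0:ℝ) ≤ 4) T.m)) hπ.le]

lemma list_bound (L : List Tm) (W : ℕ) (h : ∀ T ∈ L, W + 2*T.a ≤ T.s + 2*T.m) :
    ∃ D, 0 ≤ D ∧ ∀ t : ℝ, 0 < t →
      (∫ θ in (0:ℝ)..π, |Lval L t θ|) ≤ D * t ^ (-((W:ℝ)+1)/2) := by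
  induction L with
  | nil =>
      refine ⟨0, le_refl _, fun t ht => ?_⟩
      simp [Lval]
  | cons T L ih =>
      obtain ⟨D₁, hD₁, hb₁⟩ := term_bound T W (h T (by simp))
      obtain ⟨D₂, hD₂, hb₂⟩ := ih (fun T hT => h T (by simp [hT]))
      refine ⟨D₁ + D₂, by positivity, fun t ht => ?_⟩
      have hi1 : IntervalIntegrable (fun θ => |tval T t θ|) volume 0 π :=
        ((continuous_tval T t).abs).intervalIntegrable 0 π
      have hi2 : IntervalIntegrable (fun θ => |Lval L t θ|) volume 0 π :=
        ((continuous_Lval L t).abs).intervalIntegrable 0 π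
      have hmono : (∫ θ in (0:ℝ)..π, |Lval (T :: L) t θ|)
          ≤ ∫ θ in (0:ℝ)..π, (|tval T t θ| + |Lval L t θ|) := by
        apply intervalIntegral.integral_mono_on Real.pi_pos.le
          (((continuous_Lval (T :: L) t).abs).intervalIntegrable 0 π)
          (hi1.add hi2)
        intro θ _
        rw [Lval_cons]
        exact abs_add_le _ _
      rw [intervalIntegral.integral_add hi1 hi2] at hmono
      calc (∫ θ in (0:ℝ)..π, |Lval (T :: L) t θ|)
          ≤ (∫ θ in (0:ℝ)..π, |tval T t θ|) + ∫ θ in (0:ℝ)..π, |Lval L t θ| := hmono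
        _ ≤ D₁ * t ^ (-((W:ℝ)+1)/2) + D₂ * t ^ (-((W:ℝ)+1)/2) := by
            exact add_le_add (hb₁ t ht) (hb₂ t ht)
        _ = (D₁ + D₂) * t ^ (-((W:ℝ)+1)/2) := by ring

lemma hasDerivAt_sin_mul (c θ : ℝ) :
    HasDerivAt (fun x => Real.sin (c*x)) (Real.cos (c*θ) * c) θ := by
  have h := (Real.hasDerivAt_sin (c*θ)).comp θ ((hasDerivAt_id θ).const_mul c)
  rw [mul_one] at h; exact h

lemma hasDerivAt_cos_mul (c θ : ℝ) :
    HasDerivAt (fun x => Real.cos (c*x)) (-Real.sin (c*θ) * c) θ := by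
  have h := (Real.hasDerivAt_cos (c*θ)).comp θ ((hasDerivAt_id θ).const_mul c)
  rw [mul_one] at h; exact h

lemma ibp_even {g g' : ℝ → ℝ} (hg : ∀ θ, HasDerivAt g (g' θ) θ)
    (hgc : Continuous g) (hg'c : Continuous g') {n : ℤ} (hn : (n:ℝ) ≠ 0) :
    ∫ θ in (0:ℝ)..π, g θ * Real.cos (n*θ)
      = -(n:ℝ)⁻¹ * ∫ θ in (0:ℝ)..π, g' θ * Real.sin (n*θ) := by
  have hv : ∀ x ∈ Set.uIcc (0:ℝ) π,
      HasDerivAt (fun θ => (n:ℝ)⁻¹ * Real.sin (n*θ)) (Real.cos (n*x)) x := by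
    intro x _
    have h := (hasDerivAt_sin_mul (n:ℝ) x).const_mul ((n:ℝ)⁻¹)
    have e : (n:ℝ)⁻¹ * (Real.cos ((n:ℝ)*x) * n) = Real.cos ((n:ℝ)*x) := by
      field_simp
    rwa [e] at h
  have h := intervalIntegral.integral_mul_deriv_eq_deriv_mul
    (u := g) (v := fun θ => (n:ℝ)⁻¹ * Real.sin (n*θ))
    (u' := g') (v' := fun θ => Real.cos (n*θ))
    (fun x _ => hg x) hv
    (hg'c.intervalIntegrable 0 π)
    ((by fun_prop : Continuous fun θ : ℝ => Real.cos ((n:ℝ)*θ)).intervalIntegrable 0 π)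
  have e2 : (∫ θ in (0:ℝ)..π, g' θ * ((n:ℝ)⁻¹ * Real.sin ((n:ℝ)*θ)))
      = (n:ℝ)⁻¹ * ∫ θ in (0:ℝ)..π, g' θ * Real.sin ((n:ℝ)*θ) := by
    rw [← intervalIntegral.integral_const_mul]
    congr 1; funext θ; ring
  rw [h]
  simp only [Real.sin_int_mul_pi, Real.sin_zero, mul_zero, zero_mul, sub_zero, zero_sub, e2]
  ring

lemma ibp_odd {g g' : ℝ → ℝ} (hg : ∀ θ, HasDerivAt g (g' θ) θ)
    (hgc : Continuous g) (hg'c : Continuous g') {n : ℤ} (hn : (n:ℝ) ≠ 0)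
    (h0 : g 0 = 0) (hπ : g π = 0) :
    ∫ θ in (0:ℝ)..π, g θ * Real.sin (n*θ)
      = (n:ℝ)⁻¹ * ∫ θ in (0:ℝ)..π, g' θ * Real.cos (n*θ) := by
  have hv : ∀ x ∈ Set.uIcc (0:ℝ) π,
      HasDerivAt (fun θ => -((n:ℝ)⁻¹ * Real.cos (n*θ))) (Real.sin (n*x)) x := by
    intro x _
    have h := ((hasDerivAt_cos_mul (n:ℝ) x).const_mul ((n:ℝ)⁻¹)).neg
    have e : -((n:ℝ)⁻¹ * (-Real.sin ((n:ℝ)*x) * n)) = Real.sin ((n:ℝ)*x) := by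
      field_simp
    rwa [e] at h
  have h := intervalIntegral.integral_mul_deriv_eq_deriv_mul
    (u := g) (v := fun θ => -((n:ℝ)⁻¹ * Real.cos (n*θ)))
    (u' := g') (v' := fun θ => Real.sin (n*θ))
    (fun x _ => hg x) hv
    (hg'c.intervalIntegrable 0 π)
    ((by fun_prop : Continuous fun θ : ℝ => Real.sin ((n:ℝ)*θ)).intervalIntegrable 0 π)
  have e2 : (∫ θ in (0:ℝ)..π, g' θ * -((n:ℝ)⁻¹ * Real.cos ((n:ℝ)*θ)))
      = -((n:ℝ)⁻¹ * ∫ θ in (0:ℝ)..π, g' θ * Real.cos ((n:ℝ)*θ)) := by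
    rw [← intervalIntegral.integral_const_mul, ← intervalIntegral.integral_neg]
    congr 1; funext θ; ring
  rw [h]
  simp only [h0, hπ, zero_mul, mul_zero, sub_zero, zero_sub, e2]
  ring

noncomputable def II (ℓ : ℕ) (t : ℝ) (n : ℤ) (k : ℕ) : ℝ :=
  ∫ θ in (0:ℝ)..π, Lval (FF ℓ k) t θ *
    (if k % 2 = 0 then Real.cos ((n:ℝ)*θ) else Real.sin ((n:ℝ)*θ))

lemma II_step (ℓ : ℕ) (t : ℝ) {n : ℤ} (hn : (n:ℝ) ≠ 0) (k : ℕ) :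
    |II ℓ t n k| = |(n:ℝ)|⁻¹ * |II ℓ t n (k+1)| := by
  have hg : ∀ θ, HasDerivAt (fun θ => Lval (FF ℓ k) t θ) (Lval (FF ℓ (k+1)) t θ) θ := by
    intro θ
    have := hasDerivAt_Lval (FF ℓ k) t θ
    simpa [FF] using this
  rcases Nat.even_or_odd k with hk | hk
  · have hk0 : k % 2 = 0 := Nat.even_iff.mp hk
    have hk1 : (k+1) % 2 = 1 := by omega
    have h := ibp_even hg (continuous_Lval _ t) (continuous_Lval _ t) hn
    simp only [II, hk0, hk1, Nat.one_ne_zero, eq_self_iff_true, if_true, if_false]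
    rw [h, abs_mul, abs_neg, abs_inv]
  · have hk0 : k % 2 = 1 := Nat.odd_iff.mp hk
    have hk1 : (k+1) % 2 = 0 := by omega
    have h := ibp_odd hg (continuous_Lval _ t) (continuous_Lval _ t) hn
      (Lval_boundary ℓ k hk0 t 0 Real.sin_zero)
      (Lval_boundary ℓ k hk0 t π Real.sin_pi)
    simp only [II, hk0, hk1, Nat.one_ne_zero, eq_self_iff_true, if_true, if_false]
    rw [h, abs_mul, abs_inv]

lemma II_chain (ℓ : ℕ) (t : ℝ) {n : ℤ} (hn : (n:ℝ) ≠ 0) (k : ℕ) :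
    |II ℓ t n 0| = (|(n:ℝ)|⁻¹)^k * |II ℓ t n k| := by
  induction k with
  | zero => simp
  | succ k ih => rw [ih, II_step ℓ t hn k, pow_succ]; ring

lemma II_le (ℓ : ℕ) (t : ℝ) (n : ℤ) (k : ℕ) :
    |II ℓ t n k| ≤ ∫ θ in (0:ℝ)..π, |Lval (FF ℓ k) t θ| := by
  have htrig : Continuous fun θ : ℝ =>
      (if k % 2 = 0 then Real.cos ((n:ℝ)*θ) else Real.sin ((n:ℝ)*θ)) := by
    split <;> fun_prop
  have h1 : |II ℓ t n k| ≤ ∫ θ in (0:ℝ)..π, |Lval (FF ℓ k) t θ *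
      (if k % 2 = 0 then Real.cos ((n:ℝ)*θ) else Real.sin ((n:ℝ)*θ))| :=
    intervalIntegral.abs_integral_le_integral_abs Real.pi_pos.le
  refine h1.trans ?_
  apply intervalIntegral.integral_mono_on Real.pi_pos.le
    (((continuous_Lval _ t).mul htrig).abs.intervalIntegrable 0 π)
    ((continuous_Lval _ t).abs.intervalIntegrable 0 π)
  intro θ _
  rw [Pi.mul_apply, abs_mul]
  have : |if k % 2 = 0 then Real.cos ((n:ℝ)*θ) else Real.sin ((n:ℝ)*θ)| ≤ 1 := by
    split
    · exact Real.abs_cos_le_one _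
    · exact Real.abs_sin_le_one _
  nlinarith [abs_nonneg (Lval (FF ℓ k) t θ), abs_nonneg (if k % 2 = 0 then Real.cos ((n:ℝ)*θ) else Real.sin ((n:ℝ)*θ))]

end HKD

open Real HKD

lemma hkd_eq (ℓ : ℕ) (t : ℝ) (n : ℤ) :
    heatKernelDeriv ℓ t n = (1/π) * HKD.II ℓ t n 0 := by
  rw [heatKernelDeriv, HKD.II]
  congr 1
  apply intervalIntegral.integral_congr
  intro θ _
  simp only [HKD.FF, HKD.Lval, HKD.tval, HKD.uu, List.map_cons, List.map_nil, List.sum_cons,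
    List.sum_nil, Nat.zero_mod, eq_self_iff_true, if_true]
  rw [show (-2*(1-Real.cos θ)) = (-1) * (2*(1-Real.cos θ)) by ring, mul_pow]
  rw [show -2*t*(1-Real.cos θ) = -(t*(2*(1-Real.cos θ))) by ring]
  ring

/-- For every `ℓ ∈ ℕ` there is `C = C(ℓ) > 0` such that
`|∂_t^ℓ h_t(n)| ≤ C t^{-(ℓ+1/2)} (1 + |n|/√t)^{-ℓ}` for all `n ∈ ℤ` and `t > 0`. -/
theorem stmt5 (ℓ : ℕ) :
    ∃ C : ℝ, 0 < C ∧ ∀ (n : ℤ) (t : ℝ), 0 < t →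
      |heatKernelDeriv ℓ t n| ≤
        C * t ^ (-((ℓ : ℝ) + 1/2)) * (1 + |(n : ℝ)| / Real.sqrt t) ^ (-(ℓ : ℝ)) := by
  have hπ := Real.pi_pos
  obtain ⟨D₀, hD₀, hB₀⟩ := HKD.list_bound (HKD.FF ℓ 0) (2*ℓ)
    (fun T hT => by have := (HKD.inv_FF ℓ 0 T hT).1; omega)
  obtain ⟨Dℓ, hDℓ, hBℓ⟩ := HKD.list_bound (HKD.FF ℓ ℓ) ℓ
    (fun T hT => by have := (HKD.inv_FF ℓ ℓ T hT).1; omega)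
  refine ⟨(1/π) * (D₀ + Dℓ) * 2^ℓ + 1, by positivity, ?_⟩
  set C := (1/π) * (D₀ + Dℓ) * 2^ℓ + 1 with hC
  intro n t ht
  set X := |(n:ℝ)| / Real.sqrt t with hXdef
  have hX0 : 0 ≤ X := by positivity
  have h1X : (0:ℝ) < 1 + X := by linarith
  set e := -((ℓ:ℝ) + 1/2) with he
  have hte : (0:ℝ) < t ^ e := Real.rpow_pos_of_pos ht _
  have hCpos : (0:ℝ) < C := by positivity
  have habs : |heatKernelDeriv ℓ t n| = (1/π) * |HKD.II ℓ t n 0| := by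
    rw [hkd_eq, abs_mul, abs_of_pos (by positivity : (0:ℝ) < 1/π)]
  have h2inv : ((2:ℝ)^ℓ)⁻¹ = (2:ℝ) ^ (-(ℓ:ℝ)) := by
    rw [← Real.rpow_natCast 2 ℓ, ← Real.rpow_neg (by norm_num)]
  rcases le_or_gt X 1 with hX1 | hX1
  · -- small frequency case
    have hexp : -(((2*ℓ:ℕ):ℝ)+1)/2 = e := by push_cast; ring
    have hI : |HKD.II ℓ t n 0| ≤ D₀ * t ^ e := by
      rw [← hexp]
      exact (HKD.II_le ℓ t n 0).trans (hB₀ t ht)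
    have hpow : (2:ℝ) ^ (-(ℓ:ℝ)) ≤ (1 + X) ^ (-(ℓ:ℝ)) := by
      apply Real.rpow_le_rpow_of_nonpos h1X (by linarith)
      exact neg_nonpos.mpr (Nat.cast_nonneg ℓ)
    calc |heatKernelDeriv ℓ t n| = (1/π) * |HKD.II ℓ t n 0| := habs
      _ ≤ (1/π) * (D₀ * t ^ e) := by gcongr
      _ = ((1/π) * D₀ * 2^ℓ) * t ^ e * ((2:ℝ)^ℓ)⁻¹ := by
          field_simp
      _ ≤ C * t ^ e * ((2:ℝ)^ℓ)⁻¹ := by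
          have h2 : (0:ℝ) < 2^ℓ := by positivity
          have hDl2 : (0:ℝ) ≤ 1/π * Dℓ * 2^ℓ :=
            mul_nonneg (mul_nonneg (by positivity) hDℓ) h2.le
          have h1 : 1/π * D₀ * 2^ℓ ≤ C := by rw [hC]; nlinarith
          exact mul_le_mul_of_nonneg_right (mul_le_mul_of_nonneg_right h1 hte.le)
            (by positivity)
      _ = C * t ^ e * (2:ℝ) ^ (-(ℓ:ℝ)) := by rw [h2inv]
      _ ≤ C * t ^ e * (1 + X) ^ (-(ℓ:ℝ)) := by
          exact mul_le_mul_of_nonneg_left hpow (by positivity)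
  · -- large frequency case
    have hn : (n:ℝ) ≠ 0 := by
      intro h
      have hz : X = 0 := by rw [hXdef, h]; simp
      rw [hz] at hX1
      linarith
    have hA : (0:ℝ) < |(n:ℝ)| := abs_pos.mpr hn
    have hst : (0:ℝ) < Real.sqrt t := Real.sqrt_pos.mpr ht
    have hXpos : 0 < X := by positivity
    have hIc := HKD.II_chain ℓ t hn ℓ
    have hIl : |HKD.II ℓ t n ℓ| ≤ Dℓ * t ^ (-((ℓ:ℝ)+1)/2) := by
      have := (HKD.II_le ℓ t n ℓ).trans (hBℓ t ht)
      exact this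
    have key : t ^ e * X ^ (-(ℓ:ℝ)) = (|(n:ℝ)|⁻¹)^ℓ * t ^ (-((ℓ:ℝ)+1)/2) := by
      have e1 : X ^ (-(ℓ:ℝ)) = (|(n:ℝ)|⁻¹)^ℓ * (Real.sqrt t) ^ ℓ := by
        rw [Real.rpow_neg hX0, Real.rpow_natCast, hXdef, div_pow, inv_div, inv_pow]
        ring
      have e2 : (Real.sqrt t : ℝ) ^ ℓ = t ^ ((ℓ:ℝ)/2) := by
        rw [← Real.rpow_natCast (Real.sqrt t) ℓ, Real.sqrt_eq_rpow, ← Real.rpow_mul ht.le]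
        congr 1
        ring
      have e3 : t ^ e * t ^ ((ℓ:ℝ)/2) = t ^ (-((ℓ:ℝ)+1)/2) := by
        rw [← Real.rpow_add ht, he]
        congr 1
        ring
      rw [e1, e2, ← e3]
      ring
    have hXbound : X ^ (-(ℓ:ℝ)) ≤ 2^ℓ * (1 + X) ^ (-(ℓ:ℝ)) := by
      have h2 : (2*X) ^ (-(ℓ:ℝ)) ≤ (1 + X) ^ (-(ℓ:ℝ)) := by
        apply Real.rpow_le_rpow_of_nonpos h1X (by linarith)
        exact neg_nonpos.mpr (Nat.cast_nonneg ℓ)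
      rw [Real.mul_rpow (by norm_num) hX0] at h2
      have h3 : (0:ℝ) < (2:ℝ) ^ (-(ℓ:ℝ)) := Real.rpow_pos_of_pos (by norm_num) _
      have h4 : (2:ℝ)^ℓ * (2:ℝ)^(-(ℓ:ℝ)) = 1 := by
        rw [← h2inv]
        field_simp
      have h5 := mul_le_mul_of_nonneg_left h2 (by positivity : (0:ℝ) ≤ (2:ℝ)^ℓ)
      calc X ^ (-(ℓ:ℝ)) = ((2:ℝ)^ℓ * (2:ℝ)^(-(ℓ:ℝ))) * X ^ (-(ℓ:ℝ)) := by rw [h4]; ring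
        _ = (2:ℝ)^ℓ * ((2:ℝ)^(-(ℓ:ℝ)) * X ^ (-(ℓ:ℝ))) := by ring
        _ ≤ (2:ℝ)^ℓ * (1 + X) ^ (-(ℓ:ℝ)) := h5
    have hinvpow : (0:ℝ) ≤ (|(n:ℝ)|⁻¹)^ℓ := by positivity
    calc |heatKernelDeriv ℓ t n| = (1/π) * |HKD.II ℓ t n 0| := habs
      _ = (1/π) * ((|(n:ℝ)|⁻¹)^ℓ * |HKD.II ℓ t n ℓ|) := by rw [hIc]
      _ ≤ (1/π) * ((|(n:ℝ)|⁻¹)^ℓ * (Dℓ * t ^ (-((ℓ:ℝ)+1)/2))) := by gcongr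
      _ = (1/π) * Dℓ * (t ^ e * X ^ (-(ℓ:ℝ))) := by rw [key]; ring
      _ ≤ (1/π) * Dℓ * (t ^ e * (2^ℓ * (1 + X) ^ (-(ℓ:ℝ)))) := by
          have hmul : (0:ℝ) ≤ (1/π) * Dℓ := by positivity
          exact mul_le_mul_of_nonneg_left
            (mul_le_mul_of_nonneg_left hXbound hte.le) hmul
      _ = ((1/π) * Dℓ * 2^ℓ) * t ^ e * (1 + X) ^ (-(ℓ:ℝ)) := by ring
      _ ≤ C * t ^ e * (1 + X) ^ (-(ℓ:ℝ)) := by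
          have h2 : (0:ℝ) < 2^ℓ := by positivity
          have hD02 : (0:ℝ) ≤ 1/π * D₀ * 2^ℓ :=
            mul_nonneg (mul_nonneg (by positivity) hD₀) h2.le
          have h1 : 1/π * Dℓ * 2^ℓ ≤ C := by rw [hC]; nlinarith
          exact mul_le_mul_of_nonneg_right (mul_le_mul_of_nonneg_right h1 hte.le)
            (Real.rpow_nonneg h1X.le _)
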